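/- Min-max duality: If ζ̄ ∈ 𝓢ₐ⁺ is a critical point of Π^d and x̄ = Gₐ(ζ̄)⁻¹f, then x̄ is a global minimizer of Π on ℝⁿ, ζ̄ is a global maximizer of Π^d on 𝓢ₐ⁺, and Π(x̄) = min_{x ∈ ℝⁿ} Π(x) = max_{ζ ∈ 𝓢ₐ⁺} Π^d(ζ) = Π^d(ζ̄). -/

import Mathlib

/-!
Weak duality runs through `Ξ(x, ζ) = ½ xᵀ Gₐ(ζ) x - fᵀx - V₁*(τ) - V₂*(σ)`. For `τ` in the open
simplex, the Fenchel–Young inequalities for the log-sum-exp term (Jensen's inequality for `log`)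
and for the squares give `Ξ(x, ζ) ≤ Π(x)`; for `Gₐ(ζ)` positive definite, minimizing the quadratic
in `x` gives `Π^d(ζ) ≤ Ξ(x, ζ)`. At a critical point `ζ̄`, the criticality equations evaluated at
`x̄ = Gₐ(ζ̄)⁻¹ f` are exactly the equality cases of both Fenchel–Young inequalities, so
`Π(x̄) = Ξ(x̄, ζ̄) = Π^d(ζ̄)`, and the chain `Π^d ≤ Ξ ≤ Π` yields both extremality statements.
-/

open Matrix Real Finset

section LogSumExp

variable {ι : Type*} [Fintype ι]

theorem sum_mul_sub_log_le_log_sum_exp {w : ι → ℝ} (hw : ∀ i, 0 < w i) (hw1 : ∑ i, w i = 1)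
    (z : ι → ℝ) : ∑ i, w i * (z i - log (w i)) ≤ log (∑ i, exp (z i)) := by
  have jensen := strictConcaveOn_log_Ioi.concaveOn.le_map_sum (t := univ) (w := w)
    (p := fun i => exp (z i) / w i) (fun i _ => (hw i).le) hw1
    (fun i _ => div_pos (exp_pos _) (hw i))
  simpa [log_div (exp_ne_zero _) (hw _).ne', mul_div_cancel₀ _ (hw _).ne'] using jensen

theorem sum_mul_sub_log_eq_log_sum_exp {w z : ι → ℝ} (hw : ∀ i, 0 < w i) (hw1 : ∑ i, w i = 1)
    {C : ℝ} (hz : ∀ i, z i = log (w i) + C) :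
    ∑ i, w i * (z i - log (w i)) = log (∑ i, exp (z i)) := by
  simp only [hz, exp_add, exp_log (hw _), ← sum_mul, hw1, one_mul, log_exp, add_sub_cancel_left]

noncomputable def logSumExp (β : ℝ) (y : ι → ℝ) : ℝ :=
  (1 / β) * log (1 + ∑ i, exp (β * y i))

noncomputable def logSumExpConj (β : ℝ) (τ : ι → ℝ) : ℝ :=
  (1 / β) * (∑ i, τ i * log (τ i) + (1 - ∑ i, τ i) * log (1 - ∑ i, τ i))

variable {β : ℝ} {τ : ι → ℝ}

-- Adjoining a slack coordinate of weight `1 - ∑ i, τ i` and value `0` brings both sides into the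
-- form of the Jensen inequality above, over `Option ι`.
theorem sum_mul_sub_logSumExpConj_eq_sum_option (hβ : β ≠ 0) (y : ι → ℝ) :
    ∑ i, τ i * y i - logSumExpConj β τ =
      (1 / β) * ∑ j : Option ι, j.elim (1 - ∑ i, τ i) τ *
        (j.elim 0 (fun i => β * y i) - log (j.elim (1 - ∑ i, τ i) τ)) := by
  simp only [Fintype.sum_option, Option.elim_none, Option.elim_some, logSumExpConj, mul_sub,
    sum_sub_distrib, mul_left_comm (τ _) β, ← mul_sum]
  field_simp
  ring

theorem logSumExp_eq_sum_option (y : ι → ℝ) :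
    logSumExp β y = (1 / β) * log (∑ j : Option ι, exp (j.elim 0 (fun i => β * y i))) := by
  simp [logSumExp, Fintype.sum_option]

theorem sum_mul_sub_logSumExpConj_le_logSumExp (hβ : 0 < β) (hτ : ∀ i, 0 < τ i)
    (hτ1 : ∑ i, τ i < 1) (y : ι → ℝ) : ∑ i, τ i * y i - logSumExpConj β τ ≤ logSumExp β y := by
  rw [sum_mul_sub_logSumExpConj_eq_sum_option hβ.ne', logSumExp_eq_sum_option]
  gcongr
  refine sum_mul_sub_log_le_log_sum_exp (fun j => ?_) (by simp [Fintype.sum_option]) _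
  cases j <;> simp [hτ, hτ1]

theorem sum_mul_sub_logSumExpConj_eq_logSumExp (hβ : 0 < β) (hτ : ∀ i, 0 < τ i)
    (hτ1 : ∑ i, τ i < 1) {y : ι → ℝ} (hy : ∀ i, y i = (1 / β) * log (τ i / (1 - ∑ j, τ j))) :
    ∑ i, τ i * y i - logSumExpConj β τ = logSumExp β y := by
  rw [sum_mul_sub_logSumExpConj_eq_sum_option hβ.ne', logSumExp_eq_sum_option,
    sum_mul_sub_log_eq_log_sum_exp (fun j => ?_) (by simp [Fintype.sum_option])
      (C := -log (1 - ∑ i, τ i)) (fun j => ?_)]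
  · cases j <;> simp [hτ, hτ1]
  · cases j with
    | none => simp
    | some i =>
      simp only [Option.elim_some, hy, log_div (hτ i).ne' (sub_pos.2 hτ1).ne']
      field_simp
      ring

end LogSumExp

theorem mul_sub_sq_div_le {a : ℝ} (ha : 0 < a) (σ s : ℝ) :
    σ * s - σ ^ 2 / (2 * a) ≤ a / 2 * s ^ 2 := by
  have hgap : a / 2 * s ^ 2 - (σ * s - σ ^ 2 / (2 * a)) = (a * s - σ) ^ 2 / (2 * a) := by
    field_simp; ring
  have : 0 ≤ (a * s - σ) ^ 2 / (2 * a) := by positivity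
  linarith

theorem mul_sub_sq_div_eq {a σ s : ℝ} (ha : a ≠ 0) (hs : s = σ / a) :
    σ * s - σ ^ 2 / (2 * a) = a / 2 * s ^ 2 := by
  subst hs; field_simp; ring

namespace Matrix

variable {m : Type*} [Fintype m]

theorem IsSymm.dotProduct_mul_mul_mulVec {N : Matrix m m ℝ} (hN : N.IsSymm) (M : Matrix m m ℝ)
    (f : m → ℝ) : f ⬝ᵥ (N * M * N) *ᵥ f = (N *ᵥ f) ⬝ᵥ M *ᵥ (N *ᵥ f) := by
  rw [← mulVec_mulVec, ← mulVec_mulVec, dotProduct_mulVec, ← mulVec_transpose, hN.eq]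

variable [DecidableEq m] {G : Matrix m m ℝ}

theorem half_dotProduct_inv_mulVec_sub (hdet : IsUnit G.det) (f : m → ℝ) :
    1 / 2 * ((G⁻¹ *ᵥ f) ⬝ᵥ G *ᵥ (G⁻¹ *ᵥ f)) - f ⬝ᵥ G⁻¹ *ᵥ f = -(1 / 2) * (f ⬝ᵥ G⁻¹ *ᵥ f) := by
  rw [mulVec_mulVec, mul_nonsing_inv _ hdet, one_mulVec, dotProduct_comm]
  ring

theorem PosDef.neg_half_dotProduct_inv_mulVec_le (hG : G.PosDef) (f x : m → ℝ) :
    -(1 / 2) * (f ⬝ᵥ G⁻¹ *ᵥ f) ≤ 1 / 2 * (x ⬝ᵥ G *ᵥ x) - f ⬝ᵥ x := by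
  have hsymm : G.IsSymm := isHermitian_iff_isSymm.1 hG.isHermitian
  set xb := G⁻¹ *ᵥ f
  have hxb : G *ᵥ xb = f := by
    rw [mulVec_mulVec, mul_nonsing_inv _ hG.det_pos.ne'.isUnit, one_mulVec]
  have hnonneg : 0 ≤ (x - xb) ⬝ᵥ G *ᵥ (x - xb) := by
    simpa using hG.posSemidef.dotProduct_mulVec_nonneg (x - xb)
  have hexpand : (x - xb) ⬝ᵥ G *ᵥ (x - xb) = x ⬝ᵥ G *ᵥ x - 2 * (f ⬝ᵥ x) + f ⬝ᵥ xb := by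
    rw [mulVec_sub, dotProduct_sub, sub_dotProduct, sub_dotProduct, hxb, dotProduct_mulVec xb,
      ← mulVec_transpose, hsymm.eq, hxb, dotProduct_comm x f, dotProduct_comm xb f]
    ring
  linarith

end Matrix

namespace CanonicalDuality

variable {m ι κ : Type*} [Fintype m] [Fintype ι] [Fintype κ]
  (A : Matrix m m ℝ) (Q : ι → Matrix m m ℝ) (B : κ → Matrix m m ℝ)
  (f : m → ℝ) (d : ι → ℝ) (c : κ → ℝ) (β : ℝ) (α : κ → ℝ)

def G (ζ : ι ⊕ κ → ℝ) : Matrix m m ℝ :=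
  A + ∑ i, ζ (.inl i) • Q i + ∑ i, ζ (.inr i) • B i

noncomputable def primal (x : m → ℝ) : ℝ :=
  1 / 2 * (x ⬝ᵥ A *ᵥ x) - f ⬝ᵥ x + logSumExp β (fun i => 1 / 2 * (x ⬝ᵥ Q i *ᵥ x) + d i)
    + ∑ i, α i / 2 * (1 / 2 * (x ⬝ᵥ B i *ᵥ x) + c i) ^ 2

noncomputable def V₁Conj (τ : ι → ℝ) : ℝ := logSumExpConj β τ - ∑ i, d i * τ i

noncomputable def V₂Conj (σ : κ → ℝ) : ℝ := ∑ i, σ i ^ 2 / (2 * α i) - ∑ i, c i * σ i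

-- Gao's total complementary function `Ξ(x, ζ)`, the saddle function linking `primal` and `dual`.
noncomputable def lagrangian (x : m → ℝ) (ζ : ι ⊕ κ → ℝ) : ℝ :=
  1 / 2 * (x ⬝ᵥ G A Q B ζ *ᵥ x) - f ⬝ᵥ x - V₁Conj d β (fun i => ζ (.inl i))
    - V₂Conj c α (fun i => ζ (.inr i))

noncomputable def dual [DecidableEq m] (ζ : ι ⊕ κ → ℝ) : ℝ :=
  -(1 / 2) * (f ⬝ᵥ (G A Q B ζ)⁻¹ *ᵥ f) - V₁Conj d β (fun i => ζ (.inl i))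
    - V₂Conj c α (fun i => ζ (.inr i))

variable {A Q B f d c β α}

theorem dotProduct_G_mulVec (ζ : ι ⊕ κ → ℝ) (x : m → ℝ) :
    x ⬝ᵥ G A Q B ζ *ᵥ x = x ⬝ᵥ A *ᵥ x + ∑ i, ζ (.inl i) * (x ⬝ᵥ Q i *ᵥ x)
      + ∑ i, ζ (.inr i) * (x ⬝ᵥ B i *ᵥ x) := by
  simp only [G, add_mulVec, sum_mulVec, dotProduct_add, dotProduct_sum, smul_mulVec,
    dotProduct_smul, smul_eq_mul]

theorem lagrangian_eq (x : m → ℝ) (ζ : ι ⊕ κ → ℝ) :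
    lagrangian A Q B f d c β α x ζ = 1 / 2 * (x ⬝ᵥ A *ᵥ x) - f ⬝ᵥ x
      + (∑ i, ζ (.inl i) * (1 / 2 * (x ⬝ᵥ Q i *ᵥ x) + d i)
        - logSumExpConj β (fun i => ζ (.inl i)))
      + ∑ i, (ζ (.inr i) * (1 / 2 * (x ⬝ᵥ B i *ᵥ x) + c i) - ζ (.inr i) ^ 2 / (2 * α i)) := by
  simp only [lagrangian, V₁Conj, V₂Conj, dotProduct_G_mulVec, mul_add, sub_eq_add_neg,
    sum_add_distrib, sum_neg_distrib, mul_sum, mul_comm (d _), mul_comm (c _)]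
  ring_nf

theorem lagrangian_le_primal (hβ : 0 < β) (hα : ∀ i, 0 < α i) {ζ : ι ⊕ κ → ℝ}
    (hτ : ∀ i, 0 < ζ (.inl i)) (hτ1 : ∑ i, ζ (.inl i) < 1) (x : m → ℝ) :
    lagrangian A Q B f d c β α x ζ ≤ primal A Q B f d c β α x := by
  rw [lagrangian_eq, primal]
  exact add_le_add (add_le_add_right (sum_mul_sub_logSumExpConj_le_logSumExp hβ hτ hτ1 _) _)
    (sum_le_sum fun i _ => mul_sub_sq_div_le (hα i) _ _)

theorem lagrangian_eq_primal (hβ : 0 < β) (hα : ∀ i, α i ≠ 0) {ζ : ι ⊕ κ → ℝ}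
    (hτ : ∀ i, 0 < ζ (.inl i)) (hτ1 : ∑ i, ζ (.inl i) < 1) {x : m → ℝ}
    (hQ : ∀ i, 1 / 2 * (x ⬝ᵥ Q i *ᵥ x) + d i
      = 1 / β * log (ζ (.inl i) / (1 - ∑ j, ζ (.inl j))))
    (hB : ∀ i, 1 / 2 * (x ⬝ᵥ B i *ᵥ x) + c i = ζ (.inr i) / α i) :
    lagrangian A Q B f d c β α x ζ = primal A Q B f d c β α x := by
  rw [lagrangian_eq, primal, sum_mul_sub_logSumExpConj_eq_logSumExp hβ hτ hτ1 hQ]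
  congr 1
  exact sum_congr rfl fun i _ => mul_sub_sq_div_eq (hα i) (hB i)

variable [DecidableEq m]

theorem dual_le_lagrangian {ζ : ι ⊕ κ → ℝ} (hG : (G A Q B ζ).PosDef) (x : m → ℝ) :
    dual A Q B f d c β α ζ ≤ lagrangian A Q B f d c β α x ζ := by
  rw [dual, lagrangian]
  gcongr
  exact hG.neg_half_dotProduct_inv_mulVec_le f x

theorem dual_eq_lagrangian {ζ : ι ⊕ κ → ℝ} (hG : IsUnit (G A Q B ζ).det) :
    dual A Q B f d c β α ζ = lagrangian A Q B f d c β α ((G A Q B ζ)⁻¹ *ᵥ f) ζ := by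
  rw [dual, lagrangian, half_dotProduct_inv_mulVec_sub hG]

end CanonicalDuality

open CanonicalDuality

theorem min_max_duality_general
    {n p r : ℕ}
    (A : Matrix (Fin n) (Fin n) ℝ)
    (Q : Fin p → Matrix (Fin n) (Fin n) ℝ)
    (B : Fin r → Matrix (Fin n) (Fin n) ℝ)
    (f : Fin n → ℝ) (d : Fin p → ℝ) (c : Fin r → ℝ)
    (β : ℝ) (hβ : 0 < β) (α : Fin r → ℝ) (hα : ∀ i, 0 < α i)
    (Prim : (Fin n → ℝ) → ℝ)
    (hPrim : Prim = fun x => (1/2) * (x ⬝ᵥ A.mulVec x) - f ⬝ᵥ x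
        + (1/β) * Real.log (1 + ∑ i, Real.exp (β * ((1/2) * (x ⬝ᵥ (Q i).mulVec x) + d i)))
        + ∑ i, (α i / 2) * ((1/2) * (x ⬝ᵥ (B i).mulVec x) + c i)^2)
    (Ga : ((Fin p ⊕ Fin r) → ℝ) → Matrix (Fin n) (Fin n) ℝ)
    (hGa : Ga = fun ζ => A + ∑ i, ζ (Sum.inl i) • Q i + ∑ i, ζ (Sum.inr i) • B i)
    (Dual : ((Fin p ⊕ Fin r) → ℝ) → ℝ)
    (hDual : Dual = fun ζ => -(1/2) * (f ⬝ᵥ (Ga ζ)⁻¹.mulVec f)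
        - ((1/β) * ((∑ i, ζ (Sum.inl i) * Real.log (ζ (Sum.inl i)))
            + (1 - ∑ i, ζ (Sum.inl i)) * Real.log (1 - ∑ i, ζ (Sum.inl i)))
          - ∑ i, d i * ζ (Sum.inl i))
        - (∑ i, (ζ (Sum.inr i))^2 / (2 * α i) - ∑ i, c i * ζ (Sum.inr i)))
    (zb : (Fin p ⊕ Fin r) → ℝ)
    (hpos : ∀ i, 0 < zb (Sum.inl i)) (hsum : ∑ i, zb (Sum.inl i) < 1)
    (hcrit1 : ∀ i, (1/2) * (f ⬝ᵥ ((Ga zb)⁻¹ * Q i * (Ga zb)⁻¹).mulVec f) + d i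
        = (1/β) * Real.log (zb (Sum.inl i) / (1 - ∑ j, zb (Sum.inl j))))
    (hcrit2 : ∀ i, (1/2) * (f ⬝ᵥ ((Ga zb)⁻¹ * B i * (Ga zb)⁻¹).mulVec f) + c i
        = zb (Sum.inr i) / α i)
    (xb : Fin n → ℝ) (hxb : xb = (Ga zb)⁻¹.mulVec f)
    (hposdef : (Ga zb).PosDef) :
    (∀ x : Fin n → ℝ, Prim xb ≤ Prim x) ∧
    (∀ ζ : (Fin p ⊕ Fin r) → ℝ, (∀ i, 0 < ζ (Sum.inl i)) → (∑ i, ζ (Sum.inl i)) < 1 →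
      (Ga ζ).PosDef → Dual ζ ≤ Dual zb) ∧
    Prim xb = Dual zb := by
  obtain rfl : Ga = G A Q B := hGa
  obtain rfl : Prim = primal A Q B f d c β α := hPrim
  obtain rfl : Dual = dual A Q B f d c β α := hDual
  have hsymm : (G A Q B zb)⁻¹.IsSymm := (isHermitian_iff_isSymm.1 hposdef.isHermitian).inv
  simp only [hsymm.dotProduct_mul_mul_mulVec, ← hxb] at hcrit1 hcrit2
  have hstrong : primal A Q B f d c β α xb = dual A Q B f d c β α zb := by
    rw [← lagrangian_eq_primal hβ (fun i => (hα i).ne') hpos hsum hcrit1 hcrit2, hxb,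
      dual_eq_lagrangian hposdef.det_pos.ne'.isUnit]
  refine ⟨fun x => ?_, fun ζ hτ hτ1 hG => ?_, hstrong⟩
  · exact hstrong.trans_le
      ((dual_le_lagrangian hposdef x).trans (lagrangian_le_primal hβ hα hpos hsum x))
  · exact ((dual_le_lagrangian hG xb).trans (lagrangian_le_primal hβ hα hτ hτ1 xb)).trans_eq
      hstrong

theorem min_max_duality
    {n p r : ℕ} (hn : 0 < n) (hp : 0 < p) (hr : 0 < r)
    (A : Matrix (Fin n) (Fin n) ℝ) (hA : A.IsSymm)
    (Q : Fin p → Matrix (Fin n) (Fin n) ℝ) (hQ : ∀ i, (Q i).IsSymm)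
    (B : Fin r → Matrix (Fin n) (Fin n) ℝ) (hB : ∀ i, (B i).IsSymm)
    (f : Fin n → ℝ) (d : Fin p → ℝ) (c : Fin r → ℝ)
    (β : ℝ) (hβ : 0 < β) (α : Fin r → ℝ) (hα : ∀ i, 0 < α i)
    (Prim : (Fin n → ℝ) → ℝ)
    (hPrim : Prim = fun x => (1/2) * (x ⬝ᵥ A.mulVec x) - f ⬝ᵥ x
        + (1/β) * Real.log (1 + ∑ i, Real.exp (β * ((1/2) * (x ⬝ᵥ (Q i).mulVec x) + d i)))
        + ∑ i, (α i / 2) * ((1/2) * (x ⬝ᵥ (B i).mulVec x) + c i)^2)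
    (Ga : ((Fin p ⊕ Fin r) → ℝ) → Matrix (Fin n) (Fin n) ℝ)
    (hGa : Ga = fun ζ => A + ∑ i, ζ (Sum.inl i) • Q i + ∑ i, ζ (Sum.inr i) • B i)
    (Dual : ((Fin p ⊕ Fin r) → ℝ) → ℝ)
    (hDual : Dual = fun ζ => -(1/2) * (f ⬝ᵥ (Ga ζ)⁻¹.mulVec f)
        - ((1/β) * ((∑ i, ζ (Sum.inl i) * Real.log (ζ (Sum.inl i)))
            + (1 - ∑ i, ζ (Sum.inl i)) * Real.log (1 - ∑ i, ζ (Sum.inl i)))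
          - ∑ i, d i * ζ (Sum.inl i))
        - (∑ i, (ζ (Sum.inr i))^2 / (2 * α i) - ∑ i, c i * ζ (Sum.inr i)))
    (zb : (Fin p ⊕ Fin r) → ℝ)
    (hpos : ∀ i, 0 < zb (Sum.inl i)) (hsum : ∑ i, zb (Sum.inl i) < 1)
    (hdet : (Ga zb).det ≠ 0)
    (hcrit1 : ∀ i, (1/2) * (f ⬝ᵥ ((Ga zb)⁻¹ * Q i * (Ga zb)⁻¹).mulVec f) + d i
        = (1/β) * Real.log (zb (Sum.inl i) / (1 - ∑ j, zb (Sum.inl j))))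
    (hcrit2 : ∀ i, (1/2) * (f ⬝ᵥ ((Ga zb)⁻¹ * B i * (Ga zb)⁻¹).mulVec f) + c i
        = zb (Sum.inr i) / α i)
    (xb : Fin n → ℝ) (hxb : xb = (Ga zb)⁻¹.mulVec f)
    (hposdef : (Ga zb).PosDef) :
    (∀ x : Fin n → ℝ, Prim xb ≤ Prim x) ∧
    (∀ ζ : (Fin p ⊕ Fin r) → ℝ, (∀ i, 0 < ζ (Sum.inl i)) → (∑ i, ζ (Sum.inl i)) < 1 →
      (Ga ζ).PosDef → Dual ζ ≤ Dual zb) ∧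
    Prim xb = Dual zb :=
  min_max_duality_general A Q B f d c β hβ α hα Prim hPrim Ga hGa Dual hDual zb hpos hsum hcrit1
    hcrit2 xb hxb hposdef
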